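/- arXiv:2308.13282 — 4 statements merged into one kernel-verified Lean document; each statement's English description precedes it below -/
import Mathlib

section
/- Let n, m, k be natural numbers, H an n×n real symmetric positive-definite matrix, A an m×n real matrix, J a k×n real matrix with full row rank (rank J = k), and μ > 0 a real number. Then the (n+m+k)×(n+m+k) block matrix K(H,A,J,μ) = [[H, Aᵀ, Jᵀ], [A, −μ⁻¹ I_m, 0], [J, 0, 0]] is invertible. -/
open Matrix

/-- The block KKT matrix `K(H,A,J,μ) = [[H, Aᵀ, Jᵀ], [A, −μ⁻¹ I_m, 0], [J, 0, 0]]`. -/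
noncomputable def kktMatrix {n m k : ℕ}
    (H : Matrix (Fin n) (Fin n) ℝ) (A : Matrix (Fin m) (Fin n) ℝ)
    (J : Matrix (Fin k) (Fin n) ℝ) (μ : ℝ) :
    Matrix (Fin n ⊕ (Fin m ⊕ Fin k)) (Fin n ⊕ (Fin m ⊕ Fin k)) ℝ :=
  Matrix.fromBlocks H (Matrix.fromCols Aᵀ Jᵀ) (Matrix.fromRows A J)
    (Matrix.fromBlocks (-μ⁻¹ • (1 : Matrix (Fin m) (Fin m) ℝ)) 0 0 0)

/-!
Test a kernel vector `(p, l, c)` of the KKT matrix against `p`: the equations `A p = μ⁻¹ l` and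
`J p = 0` turn `pᵀ (H p + Aᵀ l + Jᵀ c) = 0` into `pᵀ H p + μ⁻¹ ‖l‖² = 0`, a sum of two
nonnegative terms, so `p = 0` and `l = 0`. The first block row then reads `Jᵀ c = 0`, and the
rows of `J` are linearly independent, so `c = 0`.
-/

theorem Matrix.linearIndependent_row_of_rank_eq_card {K m n : Type*} [Field K] [Fintype m]
    [Fintype n] {M : Matrix m n K} (h : M.rank = Fintype.card m) : LinearIndependent K M.row :=
  linearIndependent_iff_card_eq_finrank_span.mpr <| by
    rw [Set.finrank, ← rank_eq_finrank_span_row, h]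

theorem Matrix.mulVec_transpose_injective_of_rank_eq_card {K m n : Type*} [Field K] [Fintype m]
    [Fintype n] {M : Matrix m n K} (h : M.rank = Fintype.card m) :
    Function.Injective Mᵀ.mulVec := by
  rw [show Mᵀ.mulVec = (· ᵥ* M) from funext (mulVec_transpose M), vecMul_injective_iff]
  exact linearIndependent_row_of_rank_eq_card h

section KKTSystem

variable {n m k : Type*} [Fintype n] [Fintype m] [Fintype k]
  {H : Matrix n n ℝ} {A : Matrix m n ℝ} {J : Matrix k n ℝ} {μ : ℝ}
  {p : n → ℝ} {l : m → ℝ} {c : k → ℝ}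

theorem kkt_energy_eq_zero (hstat : H *ᵥ p + Aᵀ *ᵥ l + Jᵀ *ᵥ c = 0)
    (hA : A *ᵥ p = μ⁻¹ • l) (hJ : J *ᵥ p = 0) :
    p ⬝ᵥ (H *ᵥ p) + μ⁻¹ * (l ⬝ᵥ l) = 0 := by
  have hAl : p ⬝ᵥ (Aᵀ *ᵥ l) = μ⁻¹ * (l ⬝ᵥ l) := by
    rw [dotProduct_mulVec, vecMul_transpose, hA, smul_dotProduct, smul_eq_mul]
  have hJc : p ⬝ᵥ (Jᵀ *ᵥ c) = 0 := by
    rw [dotProduct_mulVec, vecMul_transpose, hJ, zero_dotProduct]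
  simpa only [dotProduct_add, hAl, hJc, add_zero, dotProduct_zero] using
    congrArg (p ⬝ᵥ ·) hstat

theorem kkt_eq_zero_of_posDef (hH : H.PosDef) (hμ : 0 < μ)
    (hstat : H *ᵥ p + Aᵀ *ᵥ l + Jᵀ *ᵥ c = 0) (hA : A *ᵥ p = μ⁻¹ • l) (hJ : J *ᵥ p = 0) :
    p = 0 ∧ l = 0 := by
  have hHp : 0 ≤ p ⬝ᵥ (H *ᵥ p) := hH.posSemidef.dotProduct_mulVec_nonneg p
  have hμl : 0 ≤ μ⁻¹ * (l ⬝ᵥ l) := mul_nonneg (inv_nonneg.2 hμ.le) (dotProduct_self_star_nonneg l)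
  obtain ⟨hp, hl⟩ := (add_eq_zero_iff_of_nonneg hHp hμl).1 (kkt_energy_eq_zero hstat hA hJ)
  refine ⟨?_, ?_⟩
  · by_contra hp0
    exact (hH.dotProduct_mulVec_pos hp0).ne' hp
  · exact dotProduct_self_eq_zero.1 ((mul_eq_zero.1 hl).resolve_left (inv_pos.2 hμ).ne')

end KKTSystem

theorem kktMatrix_mulVec_sumElim {n m k : ℕ}
    (H : Matrix (Fin n) (Fin n) ℝ) (A : Matrix (Fin m) (Fin n) ℝ)
    (J : Matrix (Fin k) (Fin n) ℝ) (μ : ℝ) (p : Fin n → ℝ) (l : Fin m → ℝ) (c : Fin k → ℝ) :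
    kktMatrix H A J μ *ᵥ Sum.elim p (Sum.elim l c) =
      Sum.elim (H *ᵥ p + Aᵀ *ᵥ l + Jᵀ *ᵥ c) (Sum.elim (A *ᵥ p - μ⁻¹ • l) (J *ᵥ p)) := by
  simp only [kktMatrix, fromBlocks_mulVec, fromCols_mulVec_sumElim, fromRows_mulVec,
    Sum.elim_comp_inl, Sum.elim_comp_inr, zero_mulVec, add_zero, ← Sum.elim_add_add, add_assoc]
  rw [smul_mulVec, one_mulVec, neg_smul, ← sub_eq_add_neg]

/-- If `H` is symmetric positive definite, `J` has full row rank and `μ > 0`,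
then the KKT block matrix is invertible. -/
theorem kktMatrix_isUnit {n m k : ℕ}
    (H : Matrix (Fin n) (Fin n) ℝ) (hH : H.PosDef)
    (A : Matrix (Fin m) (Fin n) ℝ)
    (J : Matrix (Fin k) (Fin n) ℝ) (hJ : J.rank = k)
    (μ : ℝ) (hμ : 0 < μ) :
    IsUnit (kktMatrix H A J μ) := by
  rw [← mulVec_injective_iff_isUnit, ← coe_mulVecLin, ← LinearMap.ker_eq_bot,
    ker_mulVecLin_eq_bot_iff]
  intro v hv
  obtain ⟨p, l, c, rfl⟩ : ∃ p l c, v = Sum.elim p (Sum.elim l c) :=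
    ⟨_, _, _, by ext (i | i | i) <;> rfl⟩
  rw [kktMatrix_mulVec_sumElim, ← Sum.elim_zero_zero, ← Sum.elim_zero_zero, Sum.elim_eq_iff,
    Sum.elim_eq_iff, sub_eq_zero] at hv
  obtain ⟨hstat, hA, hJp⟩ := hv
  obtain ⟨rfl, rfl⟩ := kkt_eq_zero_of_posDef hH hμ hstat hA hJp
  have hc : c = 0 := mulVec_transpose_injective_of_rank_eq_card (by simpa using hJ) <| by
    simpa using hstat
  rw [hc, Sum.elim_zero_zero, Sum.elim_zero_zero]
end

section
/- Let H be an n×n real symmetric positive-definite matrix, A an m×n real matrix, J a k×n real matrix with full row rank (rank J = k), μ > 0, and r ∈ ℝᵏ. Set M = (H + μ AᵀA)⁻¹. Then the block linear system H·Δp + Aᵀ·Δλ + Jᵀ·Δκ = 0, A·Δp − μ⁻¹·Δλ = 0, J·Δp = −r has a unique solution (Δp, Δλ, Δκ) ∈ ℝⁿ × ℝᵐ × ℝᵏ, given explicitly by Δκ = (J M Jᵀ)⁻¹ r, Δp = −M Jᵀ (J M Jᵀ)⁻¹ r, and Δλ = −μ A M Jᵀ (J M Jᵀ)⁻¹ r.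 -/
/-!
The second block row gives `Δλ = μ A Δp`; substituting it leaves the saddle-point system
`(H + μ AᵀA) Δp + Jᵀ Δκ = 0`, `J Δp = -r`, which is solved by eliminating `Δp` through the
Schur complement `J M Jᵀ`. This is invertible because `H + μ AᵀA`, hence `M`, is positive
definite and full row rank makes `Jᵀ` injective.
-/

namespace Matrix

variable {K : Type*} {m n k : Type*} [Fintype m] [Fintype n] [Fintype k]

theorem vecMul_injective_of_rank_eq_card [Field K] {J : Matrix k n K}
    (hJ : J.rank = Fintype.card k) : Function.Injective J.vecMul := by
  rw [vecMul_injective_iff, linearIndependent_iff_card_eq_finrank_span]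
  exact hJ.symm.trans J.rank_eq_finrank_span_row

section CommRing

variable [CommRing K] [DecidableEq n] [DecidableEq k]

theorem mulVec_eq_iff_eq_nonsing_inv_mulVec {S : Matrix n n K} (hS : IsUnit S.det)
    {x y : n → K} : S *ᵥ x = y ↔ x = S⁻¹ *ᵥ y := by
  constructor
  · rintro rfl
    rw [mulVec_mulVec, nonsing_inv_mul _ hS, one_mulVec]
  · rintro rfl
    rw [mulVec_mulVec, mul_nonsing_inv _ hS, one_mulVec]

theorem saddlePoint_iff {S : Matrix n n K} {J : Matrix k n K} (hS : IsUnit S.det)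
    (hG : IsUnit (J * S⁻¹ * Jᵀ).det) {p : n → K} {c r : k → K} :
    S *ᵥ p + Jᵀ *ᵥ c = 0 ∧ J *ᵥ p = -r ↔
      p = -((S⁻¹ * Jᵀ * (J * S⁻¹ * Jᵀ)⁻¹) *ᵥ r) ∧ c = (J * S⁻¹ * Jᵀ)⁻¹ *ᵥ r := by
  calc S *ᵥ p + Jᵀ *ᵥ c = 0 ∧ J *ᵥ p = -r
      ↔ p = -((S⁻¹ * Jᵀ) *ᵥ c) ∧ (J * S⁻¹ * Jᵀ) *ᵥ c = r := by
        rw [add_eq_zero_iff_eq_neg, mulVec_eq_iff_eq_nonsing_inv_mulVec hS, mulVec_neg,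
          mulVec_mulVec]
        refine and_congr_right fun hp => ?_
        rw [hp, mulVec_neg, mulVec_mulVec, neg_inj, Matrix.mul_assoc]
    _ ↔ p = -((S⁻¹ * Jᵀ) *ᵥ c) ∧ c = (J * S⁻¹ * Jᵀ)⁻¹ *ᵥ r := by
        rw [mulVec_eq_iff_eq_nonsing_inv_mulVec hG]
    _ ↔ _ := by
        constructor
        · rintro ⟨rfl, rfl⟩
          rw [mulVec_mulVec]
          exact ⟨rfl, rfl⟩
        · rintro ⟨rfl, rfl⟩
          rw [mulVec_mulVec]
          exact ⟨rfl, rfl⟩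

end CommRing

theorem kkt_iff_saddlePoint [Field K] {H : Matrix n n K} {A : Matrix m n K} {J : Matrix k n K}
    {μ : K} (hμ : μ ≠ 0) {p : n → K} {l : m → K} {c r : k → K} :
    H *ᵥ p + Aᵀ *ᵥ l + Jᵀ *ᵥ c = 0 ∧ A *ᵥ p - μ⁻¹ • l = 0 ∧ J *ᵥ p = -r ↔
      l = μ • A *ᵥ p ∧ ((H + μ • (Aᵀ * A)) *ᵥ p + Jᵀ *ᵥ c = 0 ∧ J *ᵥ p = -r) := by
  have hl : A *ᵥ p - μ⁻¹ • l = 0 ↔ l = μ • A *ᵥ p := by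
    rw [sub_eq_zero, eq_inv_smul_iff₀ hμ, eq_comm]
  have hS : H *ᵥ p + Aᵀ *ᵥ (μ • A *ᵥ p) = (H + μ • (Aᵀ * A)) *ᵥ p := by
    rw [add_mulVec, smul_mulVec, mulVec_smul, mulVec_mulVec]
  rw [hl]
  constructor
  · rintro ⟨h1, rfl, h3⟩
    exact ⟨rfl, hS ▸ h1, h3⟩
  · rintro ⟨rfl, h1, h3⟩
    exact ⟨hS ▸ h1, rfl, h3⟩

end Matrix

open Matrix

/-- The block linear system `H Δp + Aᵀ Δl + Jᵀ Δκ = 0`, `A Δp − μ⁻¹ Δl = 0`,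
`J Δp = −r` has a unique solution, given explicitly by
`Δκ = (J M Jᵀ)⁻¹ r`, `Δp = −M Jᵀ (J M Jᵀ)⁻¹ r`, `Δl = −μ A M Jᵀ (J M Jᵀ)⁻¹ r`,
where `M = (H + μ AᵀA)⁻¹`. -/
theorem soc_step_unique_solution {n m k : ℕ}
    (H : Matrix (Fin n) (Fin n) ℝ) (hH : H.PosDef)
    (A : Matrix (Fin m) (Fin n) ℝ)
    (J : Matrix (Fin k) (Fin n) ℝ) (hJ : J.rank = k)
    (μ : ℝ) (hμ : 0 < μ) (r : Fin k → ℝ) :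
    let M := (H + μ • (Aᵀ * A))⁻¹
    let Δκ : Fin k → ℝ := ((J * M * Jᵀ)⁻¹).mulVec r
    let Δp : Fin n → ℝ := -((M * Jᵀ * (J * M * Jᵀ)⁻¹).mulVec r)
    let Δl : Fin m → ℝ := -(μ • ((A * M * Jᵀ * (J * M * Jᵀ)⁻¹).mulVec r))
    (H.mulVec Δp + Aᵀ.mulVec Δl + Jᵀ.mulVec Δκ = 0 ∧
      A.mulVec Δp - μ⁻¹ • Δl = 0 ∧
      J.mulVec Δp = -r) ∧
    ∀ (p : Fin n → ℝ) (l : Fin m → ℝ) (c : Fin k → ℝ),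
      H.mulVec p + Aᵀ.mulVec l + Jᵀ.mulVec c = 0 →
      A.mulVec p - μ⁻¹ • l = 0 →
      J.mulVec p = -r →
      p = Δp ∧ l = Δl ∧ c = Δκ := by
  intro M Δκ Δp Δl
  have hS : (H + μ • (Aᵀ * A)).PosDef :=
    hH.add_posSemidef (by simpa using (posSemidef_conjTranspose_mul_self A).smul hμ.le)
  have hG : (J * M * Jᵀ).PosDef := by
    simpa using hS.inv.mul_mul_conjTranspose_same
      (vecMul_injective_of_rank_eq_card (hJ.trans (Fintype.card_fin k).symm))
  have hΔl : μ • A *ᵥ Δp = Δl := by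
    simp only [Δp, Δl, mulVec_neg, smul_neg, mulVec_mulVec, Matrix.mul_assoc]
  have hsolve : ∀ p l c, (H *ᵥ p + Aᵀ *ᵥ l + Jᵀ *ᵥ c = 0 ∧ A *ᵥ p - μ⁻¹ • l = 0 ∧
      J *ᵥ p = -r) ↔ p = Δp ∧ l = Δl ∧ c = Δκ := by
    intro p l c
    rw [kkt_iff_saddlePoint hμ.ne', saddlePoint_iff hS.det_pos.ne'.isUnit hG.det_pos.ne'.isUnit]
    constructor
    · rintro ⟨rfl, rfl, rfl⟩
      exact ⟨rfl, hΔl, rfl⟩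
    · rintro ⟨rfl, rfl, rfl⟩
      exact ⟨hΔl.symm, rfl, rfl⟩
  exact ⟨(hsolve _ _ _).2 ⟨rfl, rfl, rfl⟩, fun p l c h1 h2 h3 => (hsolve p l c).1 ⟨h1, h2, h3⟩⟩
end

section
/- Let H be an n×n real symmetric positive-definite matrix, A an m×n real matrix, J a k×n real matrix with full row rank (rank J = k), μ > 0, and let g ∈ ℝⁿ, λ ∈ ℝᵐ, w ∈ ℝᵐ, r ∈ ℝᵏ. Set M = (H + μ AᵀA)⁻¹. Suppose (p, λ', κ) ∈ ℝⁿ × ℝᵐ × ℝᵏ satisfies the KKT system of the coupled QP step: H·p + Aᵀ·(λ' − λ) + Jᵀ·κ = −(Aᵀλ + g), A·p − μ⁻¹·(λ' − λ) = −w, J·p = 0. Then the corrected triple p' = p − M Jᵀ (J M Jᵀ)⁻¹ r, λ'' = λ' − μ A M Jᵀ (J M Jᵀ)⁻¹ r, κ' = κ + (J M Jᵀ)⁻¹ r satisfies the KKT system of the second-order correction subproblem: H·p' + Aᵀ·(λ'' − λ) + Jᵀ·κ' = −(Aᵀλ + g), A·p' − μ⁻¹·(λ'' − λ) = −w, J·p'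 = −r. -/
/-!
With `y = (J M Jᵀ)⁻¹ r` and `d = M Jᵀ y`, the shift `(-d, -μ A d, y)` solves the KKT system
with right-hand side `(0, 0, -r)`: its first row is `(H + μ AᵀA) d = Jᵀ y`, its second row
cancels identically, and its third is `J M Jᵀ y = r`. Adding it to the given solution proves
the claim by linearity. Both inverses are genuine: `H + μ AᵀA` is positive definite, hence so
are `M` and `J M Jᵀ`, the latter because full row rank makes `x ↦ Jᵀ x` injective.
-/

open Matrix

theorem Matrix.vecMul_injective_of_rank_eq_card_s3 {K m n : Type*} [Field K] [Fintype m]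
    [Fintype n] {J : Matrix m n K} (hJ : J.rank = Fintype.card m) :
    Function.Injective J.vecMul := by
  rw [vecMul_injective_iff, linearIndependent_iff_card_eq_finrank_span, ← hJ,
    rank_eq_finrank_span_row, Set.finrank]

section Real

variable {m n : Type*} [Fintype m] [Fintype n]

theorem Matrix.PosDef.add_smul_transpose_mul_self {H : Matrix n n ℝ} (hH : H.PosDef)
    (A : Matrix m n ℝ) {μ : ℝ} (hμ : 0 ≤ μ) : (H + μ • (Aᵀ * A)).PosDef := by
  simpa [conjTranspose_eq_transpose_of_trivial] using
    hH.add_posSemidef ((posSemidef_conjTranspose_mul_self A).smul hμ)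

theorem Matrix.PosDef.mul_mul_transpose_of_rank_eq_card {M : Matrix n n ℝ} (hM : M.PosDef)
    {J : Matrix m n ℝ} (hJ : J.rank = Fintype.card m) : (J * M * Jᵀ).PosDef := by
  simpa [conjTranspose_eq_transpose_of_trivial] using
    hM.mul_mul_conjTranspose_same (vecMul_injective_of_rank_eq_card_s3 hJ)

end Real

theorem Matrix.mulVec_add_smul_transpose_mul_mulVec_of_mul_eq_one {R m n : Type*}
    [CommRing R] [Fintype m] [Fintype n] [DecidableEq n] {H M : Matrix n n R}
    {A : Matrix m n R} {μ : R} (hM : (H + μ • (Aᵀ * A)) * M = 1) (z : n → R) :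
    H *ᵥ M *ᵥ z + μ • Aᵀ *ᵥ A *ᵥ M *ᵥ z = z := by
  calc H *ᵥ M *ᵥ z + μ • Aᵀ *ᵥ A *ᵥ M *ᵥ z
      = ((H + μ • (Aᵀ * A)) * M) *ᵥ z := by
        rw [← mulVec_mulVec, add_mulVec, smul_mulVec, ← mulVec_mulVec]
    _ = z := by rw [hM, one_mulVec]

/-- If `(p, λ', κ)` solves the KKT system of the coupled QP step, then the
analytically corrected triple `(p', λ'', κ')` solves the KKT system of the
second-order correction subproblem. -/
theorem soc_correction_solves_kkt {n m k : ℕ}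
    (H : Matrix (Fin n) (Fin n) ℝ) (hH : H.PosDef)
    (A : Matrix (Fin m) (Fin n) ℝ)
    (J : Matrix (Fin k) (Fin n) ℝ) (hJ : J.rank = k)
    (μ : ℝ) (hμ : 0 < μ)
    (g : Fin n → ℝ) (lam : Fin m → ℝ) (w : Fin m → ℝ) (r : Fin k → ℝ)
    (p : Fin n → ℝ) (lam' : Fin m → ℝ) (κ : Fin k → ℝ)
    (hkkt1 : H.mulVec p + Aᵀ.mulVec (lam' - lam) + Jᵀ.mulVec κ
        = -(Aᵀ.mulVec lam + g))
    (hkkt2 : A.mulVec p - μ⁻¹ • (lam' - lam) = -w)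
    (hkkt3 : J.mulVec p = 0) :
    let M := (H + μ • (Aᵀ * A))⁻¹
    let p' : Fin n → ℝ := p - (M * Jᵀ * (J * M * Jᵀ)⁻¹).mulVec r
    let lam'' : Fin m → ℝ := lam' - μ • ((A * M * Jᵀ * (J * M * Jᵀ)⁻¹).mulVec r)
    let κ' : Fin k → ℝ := κ + ((J * M * Jᵀ)⁻¹).mulVec r
    H.mulVec p' + Aᵀ.mulVec (lam'' - lam) + Jᵀ.mulVec κ'
        = -(Aᵀ.mulVec lam + g) ∧
      A.mulVec p' - μ⁻¹ • (lam'' - lam) = -w ∧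
      J.mulVec p' = -r := by
  intro M p' lam'' κ'
  have hS := hH.add_smul_transpose_mul_self A hμ.le
  have hJMJ : (J * M * Jᵀ).PosDef :=
    hS.inv.mul_mul_transpose_of_rank_eq_card (by simpa using hJ)
  set y := (J * M * Jᵀ)⁻¹ *ᵥ r
  set d := M *ᵥ Jᵀ *ᵥ y
  have hstat : H *ᵥ d + μ • Aᵀ *ᵥ A *ᵥ d = Jᵀ *ᵥ y :=
    mulVec_add_smul_transpose_mul_mulVec_of_mul_eq_one
      (mul_nonsing_inv _ hS.det_pos.ne'.isUnit) _
  have hfeas : J *ᵥ d = r := by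
    simp only [d, y, mulVec_mulVec, ← Matrix.mul_assoc,
      mul_nonsing_inv _ hJMJ.det_pos.ne'.isUnit, one_mulVec]
  have hp' : p' = p - d := by simp only [p', d, y, mulVec_mulVec]
  have hlam'' : lam'' = lam' - μ • A *ᵥ d := by
    simp only [lam'', d, y, mulVec_mulVec, Matrix.mul_assoc]
  rw [hp', hlam'']
  refine ⟨?_, ?_, ?_⟩
  · simp only [κ', mulVec_sub, mulVec_add, mulVec_smul] at hkkt1 ⊢
    linear_combination hkkt1 - hstat
  · simp only [mulVec_sub, smul_sub, smul_smul, inv_mul_cancel₀ hμ.ne', one_smul]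
      at hkkt2 ⊢
    linear_combination hkkt2
  · rw [mulVec_sub, hkkt3, hfeas, zero_sub]
end

section
/- Let H be an n×n real symmetric positive-definite matrix, A an m×n real matrix, μ > 0, and let h : ℝⁿ → ℝᵏ be twice continuously differentiable on an open convex set U ⊆ ℝⁿ with ‖D²h(y)‖ ≤ K for all y ∈ U. Let x ∈ U and p ∈ ℝⁿ satisfy x + p ∈ U, h(x) = 0, and Dh(x)·p = 0. Let J be the k×n matrix representing Dh(x), assume J has full row rank (rank J = k), set M = (H + μ AᵀA)⁻¹ and r = h(x + p). Then the second-order correction steps Δp = −M Jᵀ (J M Jᵀ)⁻¹ r and Δλ = μ A Δp satisfy ‖Δp‖ ≤ (K/2)·‖M Jᵀ (J M Jᵀ)⁻¹‖·‖p‖² and ‖Δλ‖ ≤ (μ K/2)·‖A‖·‖M Jᵀ (J M Jᵀ)⁻¹‖·‖p‖², where matrix norms are operator norms induced by the Euclidean norm. -/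
/-!
The residual `r = h(x + p)` is a second-order Taylor remainder: since `h x = 0` and
`Dh(x) p = 0`, `r = h(x + p) - h x - Dh(x) p`, and a derivative that is `K`-Lipschitz along the
segment `[x, x + p]` bounds it by `K/2 ‖p‖²`. Both correction steps are images of `r` under fixed
matrices, so the operator norm carries this bound over to them.
-/

open Matrix

/-- The operator norm of a real matrix, induced by the Euclidean norms. -/
noncomputable def euclideanOpNorm {a b : ℕ} (X : Matrix (Fin a) (Fin b) ℝ) : ℝ :=
  ‖LinearMap.toContinuousLinearMap (Matrix.toEuclideanLin X)‖

lemma norm_equiv_symm_mulVec_le {a b : ℕ} (X : Matrix (Fin a) (Fin b) ℝ) (v : Fin b → ℝ) :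
    ‖(EuclideanSpace.equiv (Fin a) ℝ).symm (X *ᵥ v)‖
      ≤ euclideanOpNorm X * ‖(EuclideanSpace.equiv (Fin b) ℝ).symm v‖ :=
  (LinearMap.toContinuousLinearMap (toEuclideanLin X)).le_opNorm _

section Taylor

variable {E F : Type*} [NormedAddCommGroup E] [NormedSpace ℝ E]
  [NormedAddCommGroup F] [NormedSpace ℝ F]

theorem Convex.norm_fderivWithin_sub_le_of_norm_iteratedFDerivWithin_two_le
    {f : E → F} {U : Set E} (hUopen : IsOpen U) (hUconv : Convex ℝ U)
    (hf : ContDiffOn ℝ 2 f U) {K : ℝ}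
    (hbound : ∀ y ∈ U, ‖iteratedFDerivWithin ℝ 2 f U y‖ ≤ K) {y z : E} (hy : y ∈ U) (hz : z ∈ U) :
    ‖fderivWithin ℝ f U y - fderivWithin ℝ f U z‖ ≤ K * ‖y - z‖ := by
  have hU : UniqueDiffOn ℝ U := hUopen.uniqueDiffOn
  refine hUconv.norm_image_sub_le_of_norm_fderivWithin_le
    ((hf.fderivWithin hU (m := 1) le_rfl).differentiableOn one_ne_zero) (fun w hw => ?_) hz hy
  rw [← norm_iteratedFDerivWithin_one _ (hU w hw), norm_iteratedFDerivWithin_fderivWithin hU hw]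
  exact hbound w hw

theorem Convex.norm_image_add_sub_sub_le_of_lipschitz_fderiv
    {f : E → F} {f' : E → E →L[ℝ] F} {U : Set E} (hUconv : Convex ℝ U)
    (hf : ∀ y ∈ U, HasFDerivAt f (f' y) y) {K : ℝ} {x p : E}
    (hlip : ∀ y ∈ U, ‖f' y - f' x‖ ≤ K * ‖y - x‖) (hx : x ∈ U) (hxp : x + p ∈ U) :
    ‖f (x + p) - f x - f' x p‖ ≤ K / 2 * ‖p‖ ^ 2 := by
  have hseg : ∀ t ∈ Set.Icc (0 : ℝ) 1, x + t • p ∈ U := fun t ht => by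
    simpa using hUconv.add_smul_mem hx (by simpa using hxp) ht
  have hderiv : ∀ t ∈ Set.Icc (0 : ℝ) 1,
      HasDerivAt (fun s : ℝ => f (x + s • p) - f x - s • f' x p)
        (f' (x + t • p) p - f' x p) t := fun t ht => by
    have hline : HasDerivAt (fun s : ℝ => x + s • p) p t := by
      simpa using ((hasDerivAt_id t).smul_const p).const_add x
    exact (((hf _ (hseg t ht)).comp_hasDerivAt t hline).sub_const (f x)).sub
      (by simpa using (hasDerivAt_id t).smul_const (f' x p))
  have hcomp := image_norm_le_of_norm_deriv_right_le_deriv_boundary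
    (f := fun s : ℝ => f (x + s • p) - f x - s • f' x p)
    (B := fun t => K / 2 * ‖p‖ ^ 2 * t ^ 2) (B' := fun t => K * ‖p‖ ^ 2 * t)
    (fun t ht => (hderiv t ht).continuousAt.continuousWithinAt)
    (fun t ht => (hderiv t (Set.Ico_subset_Icc_self ht)).hasDerivWithinAt)
    (by simp)
    (fun t => ((hasDerivAt_pow 2 t).const_mul _).congr_deriv (by ring))
    (fun t ht => calc
      ‖f' (x + t • p) p - f' x p‖ = ‖(f' (x + t • p) - f' x) p‖ := rfl
      _ ≤ K * ‖x + t • p - x‖ * ‖p‖ :=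
        ((f' _ - f' x).le_opNorm p).trans
          (mul_le_mul_of_nonneg_right (hlip _ (hseg t (Set.Ico_subset_Icc_self ht)))
            (norm_nonneg p))
      _ = K * ‖p‖ ^ 2 * t := by
        rw [add_sub_cancel_left, norm_smul, Real.norm_of_nonneg ht.1]; ring)
    (x := 1) (by simp)
  simpa using hcomp

theorem Convex.norm_image_add_sub_sub_le_of_norm_iteratedFDerivWithin_two_le
    {f : E → F} {U : Set E} (hUopen : IsOpen U) (hUconv : Convex ℝ U)
    (hf : ContDiffOn ℝ 2 f U) {K : ℝ}
    (hbound : ∀ y ∈ U, ‖iteratedFDerivWithin ℝ 2 f U y‖ ≤ K) {x p : E}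
    (hx : x ∈ U) (hxp : x + p ∈ U) :
    ‖f (x + p) - f x - fderivWithin ℝ f U x p‖ ≤ K / 2 * ‖p‖ ^ 2 := by
  refine hUconv.norm_image_add_sub_sub_le_of_lipschitz_fderiv (fun y hy => ?_)
    (fun y hy => hUconv.norm_fderivWithin_sub_le_of_norm_iteratedFDerivWithin_two_le
      hUopen hf hbound hy hx) hx hxp
  rw [fderivWithin_of_isOpen hUopen hy]
  exact ((hf.differentiableOn two_ne_zero y hy).differentiableAt
    (hUopen.mem_nhds hy)).hasFDerivAt

end Taylor

theorem soc_step_quadratic_bound_general {n m k : ℕ}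
    (H : Matrix (Fin n) (Fin n) ℝ)
    (A : Matrix (Fin m) (Fin n) ℝ) (μ : ℝ) (hμ : 0 < μ)
    (h : EuclideanSpace ℝ (Fin n) → EuclideanSpace ℝ (Fin k))
    (U : Set (EuclideanSpace ℝ (Fin n))) (hUopen : IsOpen U) (hUconv : Convex ℝ U)
    (hh : ContDiffOn ℝ 2 h U)
    (K : ℝ)
    (hbound : ∀ y ∈ U, ‖iteratedFDerivWithin ℝ 2 h U y‖ ≤ K)
    (x p : EuclideanSpace ℝ (Fin n)) (hx : x ∈ U) (hxp : x + p ∈ U)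
    (hx0 : h x = 0) (hlin : fderivWithin ℝ h U x p = 0)
    (J : Matrix (Fin k) (Fin n) ℝ) :
    let M := (H + μ • (Aᵀ * A))⁻¹
    let r : Fin k → ℝ := EuclideanSpace.equiv (Fin k) ℝ (h (x + p))
    let Δp : Fin n → ℝ := -((M * Jᵀ * (J * M * Jᵀ)⁻¹).mulVec r)
    let Δl : Fin m → ℝ := μ • A.mulVec Δp
    ‖(EuclideanSpace.equiv (Fin n) ℝ).symm Δp‖
        ≤ K / 2 * euclideanOpNorm (M * Jᵀ * (J * M * Jᵀ)⁻¹) * ‖p‖ ^ 2 ∧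
      ‖(EuclideanSpace.equiv (Fin m) ℝ).symm Δl‖
        ≤ μ * K / 2 * euclideanOpNorm A
            * euclideanOpNorm (M * Jᵀ * (J * M * Jᵀ)⁻¹) * ‖p‖ ^ 2 := by
  intro M r Δp Δl
  set X := M * Jᵀ * (J * M * Jᵀ)⁻¹
  have hr : ‖(EuclideanSpace.equiv (Fin k) ℝ).symm r‖ ≤ K / 2 * ‖p‖ ^ 2 := by
    simpa [r, hx0, hlin] using
      hUconv.norm_image_add_sub_sub_le_of_norm_iteratedFDerivWithin_two_le hUopen hh hbound hx hxp
  have hΔp : ‖(EuclideanSpace.equiv (Fin n) ℝ).symm Δp‖ ≤ K / 2 * euclideanOpNorm X * ‖p‖ ^ 2 :=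
    calc ‖(EuclideanSpace.equiv (Fin n) ℝ).symm Δp‖
        = ‖(EuclideanSpace.equiv (Fin n) ℝ).symm (X *ᵥ r)‖ := by simp [Δp, X]
      _ ≤ euclideanOpNorm X * (K / 2 * ‖p‖ ^ 2) :=
        (norm_equiv_symm_mulVec_le X r).trans (by gcongr; exact norm_nonneg _)
      _ = K / 2 * euclideanOpNorm X * ‖p‖ ^ 2 := by ring
  refine ⟨hΔp, ?_⟩
  calc ‖(EuclideanSpace.equiv (Fin m) ℝ).symm Δl‖
      = μ * ‖(EuclideanSpace.equiv (Fin m) ℝ).symm (A *ᵥ Δp)‖ := by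
        simp [Δl, norm_smul, abs_of_pos hμ]
    _ ≤ μ * (euclideanOpNorm A * (K / 2 * euclideanOpNorm X * ‖p‖ ^ 2)) := by
        gcongr
        exact (norm_equiv_symm_mulVec_le A Δp).trans (by gcongr; exact norm_nonneg _)
    _ = μ * K / 2 * euclideanOpNorm A * euclideanOpNorm X * ‖p‖ ^ 2 := by ring

/-- Quadratic bound on the ALADIN second-order correction steps
`Δp = −M Jᵀ (J M Jᵀ)⁻¹ r` and `Δλ = μ A Δp`, where `r = h(x + p)`,
`M = (H + μ AᵀA)⁻¹` and `J` represents `Dh(x)`. -/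
theorem soc_step_quadratic_bound {n m k : ℕ}
    (H : Matrix (Fin n) (Fin n) ℝ) (hH : H.PosDef)
    (A : Matrix (Fin m) (Fin n) ℝ) (μ : ℝ) (hμ : 0 < μ)
    (h : EuclideanSpace ℝ (Fin n) → EuclideanSpace ℝ (Fin k))
    (U : Set (EuclideanSpace ℝ (Fin n))) (hUopen : IsOpen U) (hUconv : Convex ℝ U)
    (hh : ContDiffOn ℝ 2 h U)
    (K : ℝ)
    (hbound : ∀ y ∈ U, ‖iteratedFDerivWithin ℝ 2 h U y‖ ≤ K)
    (x p : EuclideanSpace ℝ (Fin n)) (hx : x ∈ U) (hxp : x + p ∈ U)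
    (hx0 : h x = 0) (hlin : fderivWithin ℝ h U x p = 0)
    (J : Matrix (Fin k) (Fin n) ℝ)
    (hJ : ∀ v : EuclideanSpace ℝ (Fin n),
      fderivWithin ℝ h U x v
        = (EuclideanSpace.equiv (Fin k) ℝ).symm
            (J.mulVec (EuclideanSpace.equiv (Fin n) ℝ v)))
    (hrank : J.rank = k) :
    let M := (H + μ • (Aᵀ * A))⁻¹
    let r : Fin k → ℝ := EuclideanSpace.equiv (Fin k) ℝ (h (x + p))
    let Δp : Fin n → ℝ := -((M * Jᵀ * (J * M * Jᵀ)⁻¹).mulVec r)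
    let Δl : Fin m → ℝ := μ • A.mulVec Δp
    ‖(EuclideanSpace.equiv (Fin n) ℝ).symm Δp‖
        ≤ K / 2 * euclideanOpNorm (M * Jᵀ * (J * M * Jᵀ)⁻¹) * ‖p‖ ^ 2 ∧
      ‖(EuclideanSpace.equiv (Fin m) ℝ).symm Δl‖
        ≤ μ * K / 2 * euclideanOpNorm A
            * euclideanOpNorm (M * Jᵀ * (J * M * Jᵀ)⁻¹) * ‖p‖ ^ 2 :=
  soc_step_quadratic_bound_general H A μ hμ h U hUopen hUconv hh K hbound x p hx hxp hx0 hlin J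
end
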